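/- The momentum-energy map R is an involution: for all x, y ∈ ℝ² with ⟨x+y, x+y⟩ ≠ 0, one has R(R(x, y)) = (x, y); that is, if u = y + k(x,y)(x+y) and v = x − k(x,y)(x+y), then ⟨u+v, u+v⟩ = ⟨x+y, x+y⟩ ≠ 0 and applying the same formulas to (u, v) returns (x, y). Consequently R is also reversible, i.e. R₂₁ ∘ R = Id, where R₂₁ = σ ∘ R ∘ σ and σ(x,y) = (y,x). -/

import Mathlib

/-- The two-dimensional Minkowski bilinear form on `ℝ²`. -/
def mink (a b : ℝ × ℝ) : ℝ := a.1 * b.1 - a.2 * b.2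

/-- The coefficient `k(x,y)` of the relativistic head-on collision map. -/
noncomputable def kcol (x y : ℝ × ℝ) : ℝ :=
  (mink x x - mink y y) / mink (x + y) (x + y)

/-- The momentum-energy map of an elastic relativistic head-on collision. -/
noncomputable def Rme (p : (ℝ × ℝ) × (ℝ × ℝ)) : (ℝ × ℝ) × (ℝ × ℝ) :=
  (p.2 + kcol p.1 p.2 • (p.1 + p.2), p.1 - kcol p.1 p.2 • (p.1 + p.2))

/-- The swap map `σ(x, y) = (y, x)`. -/
def swapMap (p : (ℝ × ℝ) × (ℝ × ℝ)) : (ℝ × ℝ) × (ℝ × ℝ) := (p.2, p.1)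

/-- The momentum-energy map is an involution, hence also reversible:
`R₂₁ ∘ R = Id` where `R₂₁ = σ ∘ R ∘ σ`. -/
theorem momentum_energy_involution
    (x y : ℝ × ℝ) (h : mink (x + y) (x + y) ≠ 0) :
    mink ((Rme (x, y)).1 + (Rme (x, y)).2) ((Rme (x, y)).1 + (Rme (x, y)).2) =
        mink (x + y) (x + y) ∧
    Rme (Rme (x, y)) = (x, y) ∧
    swapMap (Rme (swapMap (Rme (x, y)))) = (x, y) := by
  set k := kcol x y with hkdef
  set u := (Rme (x, y)).1 with hu
  set v := (Rme (x, y)).2 with hv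
  have hu' : u = y + k • (x + y) := rfl
  have hv' : v = x - k • (x + y) := rfl
  have hsum : u + v = x + y := by rw [hu', hv']; abel
  have hdiff : mink u u - mink v v = k * mink (x + y) (x + y) := by
    rw [hu', hv', hkdef]
    unfold kcol mink
    simp only [Prod.fst_add, Prod.snd_add, Prod.smul_fst, Prod.smul_snd, smul_eq_mul,
      Prod.fst_sub, Prod.snd_sub]
    unfold mink at h
    simp only [Prod.fst_add, Prod.snd_add] at h
    linear_combination (div_mul_cancel₀ (x.1 * x.1 - x.2 * x.2 - (y.1 * y.1 - y.2 * y.2)) h)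
  have hk2 : kcol u v = k := by
    unfold kcol
    rw [hsum, hdiff, mul_div_assoc, div_self h, mul_one]
  have h1 : mink (u + v) (u + v) = mink (x + y) (x + y) := by rw [hsum]
  have hR : Rme (u, v) = (x, y) := by
    unfold Rme
    dsimp only
    rw [hk2, hsum, hu', hv', Prod.mk.injEq]
    constructor <;> module
  have hRR : Rme (Rme (x, y)) = (x, y) := by
    rw [show Rme (x, y) = (u, v) from rfl, hR]
  refine ⟨h1, hRR, ?_⟩
  -- swap part
  have hsum' : v + u = x + y := by rw [add_comm]; exact hsum
  have hk3 : kcol v u = -k := by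
    unfold kcol
    rw [hsum', ← neg_sub (mink u u), hdiff, neg_div, mul_div_assoc, div_self h, mul_one]
  have : Rme (swapMap (Rme (x, y))) = (y, x) := by
    show Rme (v, u) = (y, x)
    unfold Rme
    dsimp only
    rw [hk3, hsum', hu', hv', Prod.mk.injEq]
    constructor <;> module
  rw [this]
  rfl
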